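/- arXiv:1812.05147 — 9 statements merged into one kernel-verified Lean document; each statement's English description precedes it below -/
import Mathlib

section
/- If A is an orthogonal array OA_λ(k,n) of strength 2 (a λn² × k array over an n-set such that every ordered pair of symbols occurs exactly λ times in any two columns), with k ≥ 2, n ≥ 2, λ ≥ 1, and A contains a row repeated m times, then m ≤ λn²/(k(n-1)+1). -/
/-!
Fix the repeated row `r` and let `a i` be the number of columns in which row `i` agrees with `r`.
Strength 2 determines the first two moments of `a`: each column contributes `λ n` to `∑ a i`,
and each ordered pair of columns contributes `λ n` (equal columns) or `λ` (distinct columns) to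
`∑ a i ^ 2`. Hence `∑ (n a i - (k - 1))² = λ n² (k (n - 1) + 1)`, while every copy of `r` has
`a i = k` and so alone contributes `(k (n - 1) + 1)²` to this sum of squares.
-/

/-- An orthogonal array `OA_λ(k,n)` of strength 2: a `λ n² × k` array over `Fin n`
such that within any two distinct columns every ordered pair of symbols occurs
in exactly `λ` rows. -/
def IsOA (lam k n : ℕ) (A : Fin (lam * n ^ 2) → Fin k → Fin n) : Prop :=
  ∀ c₁ c₂ : Fin k, c₁ ≠ c₂ → ∀ x y : Fin n,
    (Finset.univ.filter (fun i => A i c₁ = x ∧ A i c₂ = y)).card = lam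

open Finset

variable {ι κ α : Type*} [DecidableEq α]

section Agreements

variable [Fintype κ]

def agreements (A : ι → κ → α) (r : κ → α) (i : ι) : ℕ :=
  #{c | A i c = r c}

theorem agreements_of_eq {A : ι → κ → α} {r : κ → α} {i : ι} (h : A i = r) :
    agreements A r i = Fintype.card κ := by
  simp [agreements, h]

end Agreements

variable [Fintype ι]

def IsPairBalanced (lam : ℕ) (A : ι → κ → α) : Prop :=
  ∀ c₁ c₂ : κ, c₁ ≠ c₂ → ∀ x y : α, #{i | A i c₁ = x ∧ A i c₂ = y} = lam

namespace IsPairBalanced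

variable {lam : ℕ} {A : ι → κ → α} [Fintype α] [Nontrivial κ]

theorem card_filter_apply_eq (hA : IsPairBalanced lam A) (c : κ) (x : α) :
    #{i | A i c = x} = lam * Fintype.card α := by
  obtain ⟨c', hc'⟩ := exists_ne c
  rw [card_eq_sum_card_fiberwise (f := fun i => A i c') (t := univ) fun _ _ => mem_univ _]
  simp only [filter_filter, hA c c' hc'.symm x, sum_const, card_univ, smul_eq_mul, mul_comm]

theorem card_eq (hA : IsPairBalanced lam A) : Fintype.card ι = lam * Fintype.card α ^ 2 := by
  obtain ⟨c⟩ : Nonempty κ := inferInstance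
  rw [← card_univ, card_eq_sum_card_fiberwise (f := fun i => A i c) (t := univ)
    fun _ _ => mem_univ _]
  simp only [hA.card_filter_apply_eq c, sum_const, card_univ, smul_eq_mul]
  ring

variable [Fintype κ]

theorem sum_agreements (hA : IsPairBalanced lam A) (r : κ → α) :
    ∑ i, agreements A r i = Fintype.card κ * (lam * Fintype.card α) := by
  simp only [agreements, card_filter]
  rw [sum_comm]
  simp only [← card_filter, hA.card_filter_apply_eq, sum_const, card_univ, smul_eq_mul]

theorem sum_agreements_sq (hA : IsPairBalanced lam A) (r : κ → α) :
    ∑ i, agreements A r i ^ 2 =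
      Fintype.card κ * (lam * Fintype.card α + (Fintype.card κ - 1) * lam) := by
  classical
  have hpair (c₁ c₂ : κ) : #{i | A i c₁ = r c₁ ∧ A i c₂ = r c₂} =
      if c₁ = c₂ then lam * Fintype.card α else lam := by
    split_ifs with h
    · subst h
      simpa only [and_self] using hA.card_filter_apply_eq c₁ (r c₁)
    · exact hA c₁ c₂ h _ _
  have hrow (c₁ : κ) : ∑ c₂, (if c₁ = c₂ then lam * Fintype.card α else lam) =
      lam * Fintype.card α + (Fintype.card κ - 1) * lam := by
    rw [← add_sum_erase _ _ (mem_univ c₁), if_pos rfl,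
      sum_congr rfl fun c₂ h => if_neg (ne_of_mem_erase h).symm, sum_const,
      card_erase_of_mem (mem_univ _), card_univ, smul_eq_mul]
  calc ∑ i, agreements A r i ^ 2
      = ∑ i, ∑ c₁, ∑ c₂, if A i c₁ = r c₁ ∧ A i c₂ = r c₂ then 1 else 0 := by
        simp only [agreements, sq, card_filter, sum_mul_sum, ite_zero_mul_ite_zero, mul_one]
    _ = ∑ c₁, ∑ c₂, #{i | A i c₁ = r c₁ ∧ A i c₂ = r c₂} := by
        simp only [card_filter]
        rw [sum_comm]
        exact sum_congr rfl fun _ _ => sum_comm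
    _ = Fintype.card κ * (lam * Fintype.card α + (Fintype.card κ - 1) * lam) := by
        simp only [hpair, hrow, sum_const, card_univ, smul_eq_mul]

theorem sum_card_mul_agreements_sub_sq (hA : IsPairBalanced lam A) (r : κ → α) :
    ∑ i, ((Fintype.card α : ℤ) * agreements A r i - (Fintype.card κ - 1)) ^ 2 =
      (lam : ℤ) * Fintype.card α ^ 2 * (Fintype.card κ * (Fintype.card α - 1) + 1) := by
  set n := Fintype.card α
  set k := Fintype.card κ
  have hS1 : ∑ i, (agreements A r i : ℤ) = k * (lam * n) := by
    exact_mod_cast hA.sum_agreements r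
  have hS2 : ∑ i, (agreements A r i : ℤ) ^ 2 = k * (lam * n + (k - 1) * lam) := by
    have hk : 1 ≤ k := Fintype.card_pos
    exact_mod_cast hA.sum_agreements_sq r
  have hN : (Fintype.card ι : ℤ) = lam * n ^ 2 := by exact_mod_cast hA.card_eq
  have hexpand (i : ι) : ((n : ℤ) * agreements A r i - (k - 1)) ^ 2 =
      n ^ 2 * (agreements A r i : ℤ) ^ 2 - 2 * n * (k - 1) * agreements A r i + (k - 1) ^ 2 := by
    ring
  simp only [hexpand, sum_add_distrib, sum_sub_distrib, ← mul_sum, hS1, hS2, sum_const, card_univ,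
    nsmul_eq_mul, hN]
  ring

theorem card_filter_eq_mul_le_card (hA : IsPairBalanced lam A) (r : κ → α) :
    #{i | A i = r} * (Fintype.card κ * (Fintype.card α - 1) + 1) ≤ Fintype.card ι := by
  set n := Fintype.card α
  set k := Fintype.card κ
  have hn : 1 ≤ n := Fintype.card_pos_iff.2 ⟨r (Classical.arbitrary κ)⟩
  set D : ℤ := k * (n - 1) + 1
  have hD : 0 < D := by
    have : (1 : ℤ) ≤ n := by exact_mod_cast hn
    positivity
  have hcopy : ∀ i ∈ ({i | A i = r} : Finset ι),
      ((n : ℤ) * agreements A r i - (k - 1)) ^ 2 = D ^ 2 := by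
    intro i hi
    rw [agreements_of_eq (mem_filter.1 hi).2]
    ring
  have hle : #{i | A i = r} * D ^ 2 ≤ Fintype.card ι * D := by
    calc (#{i | A i = r} : ℤ) * D ^ 2
        = ∑ i ∈ {i | A i = r}, ((n : ℤ) * agreements A r i - (k - 1)) ^ 2 := by
          rw [sum_congr rfl hcopy, sum_const, nsmul_eq_mul]
      _ ≤ ∑ i, ((n : ℤ) * agreements A r i - (k - 1)) ^ 2 :=
          sum_le_sum_of_subset_of_nonneg (filter_subset _ _) fun _ _ _ => sq_nonneg _
      _ = Fintype.card ι * D := by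
          rw [hA.sum_card_mul_agreements_sub_sq r, hA.card_eq]
          push_cast
          ring
  zify [hn]
  exact le_of_mul_le_mul_right (by rwa [mul_assoc, ← sq]) hD

end IsPairBalanced

theorem stmt0_general (k n lam m : ℕ) (hk : 2 ≤ k)
    (A : Fin (lam * n ^ 2) → Fin k → Fin n) (hA : IsOA lam k n A)
    (r : Fin k → Fin n)
    (hm : (Finset.univ.filter (fun i => A i = r)).card = m) :
    m * (k * (n - 1) + 1) ≤ lam * n ^ 2 := by
  have : Nontrivial (Fin k) := Fin.nontrivial_iff_two_le.2 hk
  simpa only [hm, Fintype.card_fin] using IsPairBalanced.card_filter_eq_mul_le_card hA r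

theorem stmt0 (k n lam m : ℕ) (hk : 2 ≤ k) (hn : 2 ≤ n) (hlam : 1 ≤ lam)
    (A : Fin (lam * n ^ 2) → Fin k → Fin n) (hA : IsOA lam k n A)
    (r : Fin k → Fin n)
    (hm : (Finset.univ.filter (fun i => A i = r)).card = m) :
    m * (k * (n - 1) + 1) ≤ lam * n ^ 2 :=
  stmt0_general k n lam m hk A hA r hm
end

section
/- Let A be an OA_λ(k,n) containing a row 0 0 ⋯ 0 repeated exactly m = λn²/(k(n-1)+1) times (i.e., A is optimal). Then every row of A other than these m rows contains exactly k(λn − m)/(λn² − m) occurrences of the symbol 0. -/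
open Finset

/-!
Let `z_j` be the number of zeros in row `j`. Counting zeros column by column, and pairs of
zeros in pairs of columns, gives `∑ z_j = kλn` and `∑ z_j² = kλ(n + k - 1)`. Dropping the `m`
all-zero rows leaves `T = λn² - m` rows with `∑ z_j = k(λn - m)` and a known `∑ z_j²`, and the
optimality of `m` is exactly the equality case `T ∑ z_j² = (∑ z_j)²` of Cauchy–Schwarz, which
forces all the remaining `z_j` to be equal.
-/

theorem Finset.card_mul_eq_sum_of_card_mul_sum_sq_eq {ι R : Type*} [CommRing R] [LinearOrder R]
    [IsStrictOrderedRing R] {s : Finset ι} {f : ι → R}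
    (h : #s * ∑ i ∈ s, f i ^ 2 = (∑ i ∈ s, f i) ^ 2) {i : ι} (hi : i ∈ s) :
    #s * f i = ∑ j ∈ s, f j := by
  have hvar : ∑ j ∈ s, (#s * f j - ∑ l ∈ s, f l) ^ 2 = 0 := by
    simp only [sub_sq, sum_add_distrib, sum_sub_distrib, mul_pow, ← mul_sum, ← sum_mul,
      sum_const, nsmul_eq_mul]
    linear_combination (#s : R) * h
  rw [sum_eq_zero_iff_of_nonneg fun j _ => sq_nonneg _] at hvar
  exact sub_eq_zero.mp (pow_eq_zero_iff two_ne_zero |>.mp (hvar i hi))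

theorem Finset.sum_compl_eq_sum_sub_card_nsmul {ι M : Type*} [Fintype ι] [DecidableEq ι]
    [AddCommGroup M] {s : Finset ι} {f : ι → M} {b : M} (hf : ∀ i ∈ s, f i = b) :
    ∑ i ∈ sᶜ, f i = ∑ i, f i - #s • b := by
  rw [← sum_compl_add_sum s f, sum_eq_card_nsmul hf, add_sub_cancel_right]

namespace IsOA

variable {lam k n : ℕ} {A : Fin (lam * n ^ 2) → Fin k → Fin n}

theorem card_filter_eq (hA : IsOA lam k n A) (hk : 1 < k) (c : Fin k) (x : Fin n) :
    #{i | A i c = x} = lam * n := by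
  obtain ⟨c', hc'⟩ := Fintype.exists_ne_of_one_lt_card (by simpa using hk) c
  rw [card_eq_sum_card_fiberwise (f := fun i => A i c') (t := univ) fun _ _ => mem_univ _]
  simp only [filter_filter, hA c c' hc'.symm, sum_const, card_univ, Fintype.card_fin,
    smul_eq_mul, mul_comm]

theorem card_filter_and_eq (hA : IsOA lam k n A) (hk : 1 < k) (c₁ c₂ : Fin k) (x : Fin n) :
    #{i | A i c₁ = x ∧ A i c₂ = x} = if c₁ = c₂ then lam * n else lam := by
  split_ifs with h
  · subst h
    simpa only [and_self] using hA.card_filter_eq hk c₁ x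
  · exact hA c₁ c₂ h x x

theorem sum_card_filter_eq (hA : IsOA lam k n A) (hk : 1 < k) (x : Fin n) :
    ∑ i, #{c | A i c = x} = k * (lam * n) := by
  have := sum_card_bipartiteAbove_eq_sum_card_bipartiteBelow (s := univ) (t := univ)
    (r := fun i c => A i c = x)
  simp only [bipartiteAbove, bipartiteBelow] at this
  simp [this, hA.card_filter_eq hk]

theorem sum_card_filter_sq_eq (hA : IsOA lam k n A) (hk : 1 < k) (x : Fin n) :
    ∑ i, #{c | A i c = x} ^ 2 = k * (lam * n + (k - 1) * lam) := by
  have hsq : ∀ i, #{c | A i c = x} ^ 2 = #{p : Fin k × Fin k | A i p.1 = x ∧ A i p.2 = x} := by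
    intro i
    rw [sq, ← card_product, ← filter_product, univ_product_univ]
  have := sum_card_bipartiteAbove_eq_sum_card_bipartiteBelow (s := univ) (t := univ)
    (r := fun i (p : Fin k × Fin k) => A i p.1 = x ∧ A i p.2 = x)
  simp only [bipartiteAbove, bipartiteBelow] at this
  rw [sum_congr rfl fun i _ => hsq i, this, ← univ_product_univ, sum_product]
  simp [hA.card_filter_and_eq hk, sum_ite, filter_eq, filter_ne, mul_comm]

theorem sum_compl_card_filter_eq (hA : IsOA lam k n A) (hk : 1 < k) (x : Fin n) :
    ∑ j ∈ ({j | A j = fun _ => x} : Finset _)ᶜ, (#{c | A j c = x} : ℤ)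
      = k * (lam * n - #{j | A j = fun _ => x}) := by
  rw [sum_compl_eq_sum_sub_card_nsmul (b := (k : ℤ)) fun j hj => by simp_all]
  push_cast [← Nat.cast_sum, hA.sum_card_filter_eq hk x]
  ring

theorem sum_compl_card_filter_sq_eq (hA : IsOA lam k n A) (hk : 1 < k) (x : Fin n) :
    ∑ j ∈ ({j | A j = fun _ => x} : Finset _)ᶜ, (#{c | A j c = x} : ℤ) ^ 2
      = k * (lam * n + (k - 1) * lam) - #{j | A j = fun _ => x} * k ^ 2 := by
  rw [sum_compl_eq_sum_sub_card_nsmul (b := (k : ℤ) ^ 2) fun j hj => by simp_all]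
  have := hA.sum_card_filter_sq_eq hk x
  zify [hk.le] at this
  rw [this]
  ring

end IsOA

theorem stmt1_general (k n lam m : ℕ) [NeZero n] (hk : 2 ≤ k)
    (hopt : m * (k * (n - 1) + 1) = lam * n ^ 2)
    (A : Fin (lam * n ^ 2) → Fin k → Fin n) (hA : IsOA lam k n A)
    (hrep : (Finset.univ.filter (fun i => A i = fun _ => (0 : Fin n))).card = m) :
    ∀ i, A i ≠ (fun _ => (0 : Fin n)) →
      (Finset.univ.filter (fun c => A i c = 0)).card * (lam * n ^ 2 - m)
        = k * (lam * n - m) := by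
  intro i hi
  have hmn : m ≤ lam * n := by
    refine Nat.le_of_mul_le_mul_right ?_ (NeZero.pos n)
    have hk' : n - 1 ≤ k * (n - 1) := Nat.le_mul_of_pos_left _ (by omega)
    calc m * n ≤ m * (k * (n - 1) + 1) := Nat.mul_le_mul_left _ (by omega)
      _ = lam * n * n := by rw [hopt, sq, mul_assoc]
  have hm : m ≤ lam * n ^ 2 :=
    hmn.trans (Nat.mul_le_mul_left lam (Nat.le_self_pow two_ne_zero n))
  have hcard : (#({j | A j = fun _ => 0} : Finset _)ᶜ : ℤ) = lam * n ^ 2 - m := by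
    rw [card_compl, Fintype.card_fin, hrep]; push_cast [hm]; ring
  have hsum := hA.sum_compl_card_filter_eq hk 0
  have hsq := hA.sum_compl_card_filter_sq_eq hk 0
  rw [hrep] at hsum hsq
  zify [NeZero.one_le (n := n)] at hopt
  have hi' := card_mul_eq_sum_of_card_mul_sum_sq_eq
    (by rw [hcard, hsum, hsq]; linear_combination (-(k * lam * (n - 1) : ℤ)) * hopt)
    (by simpa using hi)
  rw [hcard, hsum] at hi'
  zify [hm, hmn]
  linear_combination hi'

theorem stmt1 (k n lam m : ℕ) [NeZero n] (hk : 2 ≤ k) (hn : 2 ≤ n) (hlam : 1 ≤ lam)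
    (hopt : m * (k * (n - 1) + 1) = lam * n ^ 2)
    (A : Fin (lam * n ^ 2) → Fin k → Fin n) (hA : IsOA lam k n A)
    (hrep : (Finset.univ.filter (fun i => A i = fun _ => (0 : Fin n))).card = m) :
    ∀ i, A i ≠ (fun _ => (0 : Fin n)) →
      (Finset.univ.filter (fun c => A i c = 0)).card * (lam * n ^ 2 - m)
        = k * (lam * n - m) :=
  stmt1_general k n lam m hk hopt A hA hrep
end

section
/- If (m, λ, k, n) is a basic quadruple with m > 1 and n prime, then m = n, and moreover k = ns+1 and λ = (n−1)s+1 for some positive integer s with gcd(n, s−1) = 1. -/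
/-!
Writing `k = n s + 1`, the defining equation divides by `n` to `m ((n-1) s + 1) = λ n`.
As `m` is coprime to `λ`, it divides the prime `n`, so `m = n` and then `λ = (n-1) s + 1`.
Finally `λ + (s - 1) = n s`, so a common divisor of `n` and `s - 1` divides `gcd(n, λ) = 1`.
-/

/-- A quadruple of positive integers `(m, λ, k, n)` is feasible if `k ≥ 2`, `n ≥ 2`,
`m = λ n² / (k(n-1)+1)`, and `(k-1)/n` is a positive integer. -/
def Feasible (m lam k n : ℕ) : Prop :=
  0 < m ∧ 0 < lam ∧ 2 ≤ k ∧ 2 ≤ n ∧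
    m * (k * (n - 1) + 1) = lam * n ^ 2 ∧ n ∣ k - 1 ∧ 1 ≤ (k - 1) / n

/-- A feasible quadruple is basic if moreover `gcd(m, λ) = 1`. -/
def Basic (m lam k n : ℕ) : Prop :=
  Feasible m lam k n ∧ Nat.gcd m lam = 1

theorem Nat.mul_add_one_mul_sub_one_add_one {n : ℕ} (hn : 0 < n) (s : ℕ) :
    (n * s + 1) * (n - 1) + 1 = n * ((n - 1) * s + 1) := by
  obtain ⟨u, rfl⟩ : ∃ u, n = u + 1 := ⟨n - 1, by omega⟩
  simp only [Nat.add_sub_cancel]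
  ring

theorem Nat.coprime_sub_one_of_coprime_sub_one_mul_add_one {n s : ℕ} (hn : 0 < n) (hs : 0 < s)
    (h : Nat.Coprime n ((n - 1) * s + 1)) : Nat.Coprime n (s - 1) := by
  have hsum : (s - 1) + ((n - 1) * s + 1) = n * s := by
    obtain ⟨u, rfl⟩ : ∃ u, n = u + 1 := ⟨n - 1, by omega⟩
    simp only [Nat.add_sub_cancel]
    rw [add_mul, one_mul]
    omega
  have hd : Nat.gcd n (s - 1) ∣ (n - 1) * s + 1 :=
    (Nat.dvd_add_right (Nat.gcd_dvd_right n (s - 1))).mp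
      (hsum ▸ Dvd.dvd.mul_right (Nat.gcd_dvd_left n (s - 1)) s)
  exact Nat.eq_one_of_dvd_coprimes h (Nat.gcd_dvd_left n (s - 1)) hd

namespace Feasible

variable {m lam k n : ℕ}

theorem exists_eq_mul_add_one (h : Feasible m lam k n) : ∃ s, 0 < s ∧ k = n * s + 1 := by
  obtain ⟨-, -, hk, -, -, hdvd, hdiv⟩ := h
  exact ⟨(k - 1) / n, hdiv, by rw [Nat.mul_div_cancel' hdvd]; omega⟩

theorem mul_sub_one_mul_add_one_eq {s : ℕ} (h : Feasible m lam k n) (hk : k = n * s + 1) :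
    m * ((n - 1) * s + 1) = lam * n := by
  obtain ⟨-, -, -, hn, heq, -, -⟩ := h
  subst hk
  rw [Nat.mul_add_one_mul_sub_one_add_one (by omega)] at heq
  apply Nat.eq_of_mul_eq_mul_left (show 0 < n by omega)
  rw [← mul_assoc, mul_comm n m, mul_assoc, heq]
  ring

end Feasible

theorem stmt4 (m lam k n : ℕ) (hb : Basic m lam k n) (hm : 1 < m)
    (hp : n.Prime) :
    m = n ∧ ∃ s : ℕ, 0 < s ∧ k = n * s + 1 ∧ lam = (n - 1) * s + 1 ∧
      Nat.gcd n (s - 1) = 1 := by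
  obtain ⟨hf, hcop⟩ := hb
  obtain ⟨s, hs, hk⟩ := hf.exists_eq_mul_add_one
  have hred := hf.mul_sub_one_mul_add_one_eq hk
  have hmn : m = n := by
    have hdvd : m ∣ n := Nat.Coprime.dvd_of_dvd_mul_left hcop ⟨_, hred.symm⟩
    exact (hp.eq_one_or_self_of_dvd m hdvd).resolve_left hm.ne'
  subst hmn
  have hlam : lam = (m - 1) * s + 1 :=
    (Nat.eq_of_mul_eq_mul_left hp.pos (by rw [hred, mul_comm])).symm
  exact ⟨rfl, s, hs, hk, hlam,
    Nat.coprime_sub_one_of_coprime_sub_one_mul_add_one hp.pos hs (hlam ▸ hcop)⟩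
end

section
/- For every positive integer t, there exists an OA_{2t+1}(4t+1, 2) containing a row repeated 2 times if and only if there exists a (4t+1, 2t+1, 2t+1)-BIBD. -/
/-- A `(v, κ, μ)`-BIBD with `b` blocks: a family of `κ`-subsets of a `v`-set such
that every pair of distinct points lies in exactly `μ` blocks. -/
def IsBIBD (v b κ μ : ℕ) (B : Fin b → Finset (Fin v)) : Prop :=
  (∀ i, (B i).card = κ) ∧
  ∀ x y : Fin v, x ≠ y →
    (Finset.univ.filter (fun i => x ∈ B i ∧ y ∈ B i)).card = μ

open Finset

namespace IsBIBD

variable {v b κ μ : ℕ} {B : Fin b → Finset (Fin v)}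

theorem card_filter_mem_mul (hB : IsBIBD v b κ μ B) (x : Fin v) :
    #{i | x ∈ B i} * (κ - 1) = μ * (v - 1) := by
  have hblock : ∀ i,
      #{y | y ≠ x ∧ x ∈ B i ∧ y ∈ B i} = if x ∈ B i then κ - 1 else 0 := by
    intro i
    split_ifs with hx
    · rw [← hB.1 i, ← card_erase_of_mem hx]
      congr 1; ext y; simp [hx]
    · simp [hx]
  have hpoint : ∀ y, #{i | y ≠ x ∧ x ∈ B i ∧ y ∈ B i} = if y ≠ x then μ else 0 := by
    intro y
    split_ifs with hy
    · simpa [hy] using hB.2 x y (Ne.symm hy)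
    · simp [hy]
  calc #{i | x ∈ B i} * (κ - 1)
      = ∑ i, #{y | y ≠ x ∧ x ∈ B i ∧ y ∈ B i} := by
        simp only [hblock, ← sum_filter, sum_const, smul_eq_mul]
    _ = ∑ y, #{i | y ≠ x ∧ x ∈ B i ∧ y ∈ B i} := by
        simp only [card_filter]; exact sum_comm
    _ = μ * (v - 1) := by
        simp only [hpoint, ← sum_filter, sum_const, smul_eq_mul, filter_ne',
          card_erase_of_mem (mem_univ x), card_univ, Fintype.card_fin, mul_comm]

theorem mul_eq_mul_of_card_filter_mem (hB : IsBIBD v b κ μ B) {r : ℕ}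
    (hr : ∀ x, #{i | x ∈ B i} = r) : b * κ = v * r := by
  calc b * κ = ∑ i, #(B i) := by simp [hB.1]
    _ = ∑ i, ∑ x, if x ∈ B i then 1 else 0 := by simp
    _ = ∑ x, #{i | x ∈ B i} := by simp only [card_filter]; exact sum_comm
    _ = v * r := by simp [hr]

end IsBIBD

theorem exists_isBIBD_of_finset {ι : Type*} {v κ μ : ℕ} (s : Finset ι)
    (B : ι → Finset (Fin v)) (hcard : ∀ i ∈ s, #(B i) = κ)
    (hpair : ∀ x y, x ≠ y → #{i ∈ s | x ∈ B i ∧ y ∈ B i} = μ) :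
    ∃ b, ∃ B' : Fin b → Finset (Fin v), IsBIBD v b κ μ B' := by
  let e := s.equivFin.symm
  refine ⟨#s, fun j => B (e j), fun j => hcard _ (e j).2, fun x y hxy => ?_⟩
  rw [← hpair x y hxy, card_filter, card_filter]
  exact (e.sum_comp _).trans (sum_coe_sort s fun i => if x ∈ B i ∧ y ∈ B i then 1 else 0)

namespace IsOA

variable {lam k n : ℕ} {A : Fin (lam * n ^ 2) → Fin k → Fin n}

theorem comp_perm (hA : IsOA lam k n A) (σ : Fin k → Equiv.Perm (Fin n)) :
    IsOA lam k n fun i c => σ c (A i c) := by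
  intro c₁ c₂ hc x y
  simpa only [Equiv.eq_symm_apply] using
    hA c₁ c₂ hc ((σ c₁).symm x) ((σ c₂).symm y)

theorem card_filter_apply_eq (hA : IsOA lam k n A) (hk : 2 ≤ k) (c : Fin k) (x : Fin n) :
    #{i | A i c = x} = n * lam := by
  have : Nontrivial (Fin k) := Fin.nontrivial_iff_two_le.mpr hk
  obtain ⟨c', hc'⟩ := exists_ne c
  rw [card_eq_sum_card_fiberwise (f := fun i => A i c') (t := univ) (by simp)]
  simp only [filter_filter, hA c c' hc'.symm x, sum_const, card_univ, Fintype.card_fin,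
    smul_eq_mul]

end IsOA

section Binary

variable {lam k : ℕ} {A : Fin (lam * 2 ^ 2) → Fin k → Fin 2}

theorem isOA_two_of_card_filter_eq_one (hcol : ∀ c, #{i | A i c = 1} = 2 * lam)
    (hpair : ∀ c₁ c₂, c₁ ≠ c₂ → #{i | A i c₁ = 1 ∧ A i c₂ = 1} = lam) :
    IsOA lam k 2 A := by
  have h10 : ∀ c₁ c₂, c₁ ≠ c₂ → #{i | A i c₁ = 1 ∧ ¬A i c₂ = 1} = lam := by
    intro c₁ c₂ hc
    have := card_filter_add_card_filter_not (s := {i | A i c₁ = 1}) (fun i => A i c₂ = 1)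
    rw [filter_filter, filter_filter, hpair c₁ c₂ hc, hcol] at this
    omega
  have h00 : ∀ c₁ c₂, c₁ ≠ c₂ → #{i | ¬A i c₁ = 1 ∧ ¬A i c₂ = 1} = lam := by
    intro c₁ c₂ hc
    have hc₁ := card_filter_add_card_filter_not (s := univ) (fun i => A i c₁ = 1)
    have := card_filter_add_card_filter_not (s := {i | ¬A i c₁ = 1}) (fun i => A i c₂ = 1)
    simp only [filter_filter, card_univ, Fintype.card_fin, hcol] at this hc₁
    rw [filter_congr (fun i _ => and_comm), h10 c₂ c₁ hc.symm] at this
    omega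
  have hzero : ∀ x : Fin 2, x = 0 ↔ ¬x = 1 := by decide
  intro c₁ c₂ hc x y
  fin_cases x <;> fin_cases y <;> simp only [Fin.zero_eta, Fin.mk_one, hzero]
  · exact h00 c₁ c₂ hc
  · rw [filter_congr (fun i _ => and_comm)]; exact h10 c₂ c₁ hc.symm
  · exact h10 c₁ c₂ hc
  · exact hpair c₁ c₂ hc

theorem IsOA.sum_card_filter_eq_one (hA : IsOA lam k 2 A) (hk : 2 ≤ k) :
    ∑ i, #{c | A i c = 1} = k * (2 * lam) := by
  simp only [card_filter]
  rw [sum_comm]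
  simp only [← card_filter, hA.card_filter_apply_eq hk, sum_const, card_univ, Fintype.card_fin,
    smul_eq_mul]

theorem IsOA.sum_card_filter_eq_one_sq (hA : IsOA lam k 2 A) (hk : 2 ≤ k) :
    ∑ i, #{c | A i c = 1} ^ 2 = k * (k + 1) * lam := by
  have hcount : ∀ c₁ c₂ : Fin k,
      #{i | A i c₁ = 1 ∧ A i c₂ = 1} = lam + if c₁ = c₂ then lam else 0 := by
    intro c₁ c₂
    split_ifs with hc
    · subst hc; simp only [and_self, hA.card_filter_apply_eq hk]; ring
    · simpa using hA c₁ c₂ hc 1 1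
  calc ∑ i, #{c | A i c = 1} ^ 2
      = ∑ i, ∑ c₁, ∑ c₂, if A i c₁ = 1 ∧ A i c₂ = 1 then 1 else 0 := by
        simp only [sq, card_filter, Fintype.sum_mul_sum, ite_zero_mul_ite_zero, mul_one]
    _ = ∑ c₁, ∑ c₂, #{i | A i c₁ = 1 ∧ A i c₂ = 1} := by
        simp only [card_filter]; rw [sum_comm]; exact sum_congr rfl fun _ _ => sum_comm
    _ = k * (k + 1) * lam := by
        simp only [hcount, sum_add_distrib, sum_const, card_univ, Fintype.card_fin, smul_eq_mul,
          sum_ite_eq, mem_univ, if_true]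
        ring

theorem IsOA.card_filter_eq_one_of_ne_zero (hA : IsOA lam k 2 A) (hk : 2 ≤ k)
    (hkl : k + 1 = 2 * lam) (hzero : 2 ≤ #{i | A i = 0}) {i : Fin (lam * 2 ^ 2)}
    (hi : A i ≠ 0) :
    #{c | A i c = 1} = lam := by
  set dev : Fin (lam * 2 ^ 2) → ℤ := fun i => ((#{c | A i c = 1} : ℕ) - lam : ℤ) ^ 2
  have htotal : ∑ i, dev i = 2 * lam ^ 2 := by
    have h₁ := congrArg (Nat.cast : ℕ → ℤ) (hA.sum_card_filter_eq_one hk)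
    have h₂ := congrArg (Nat.cast : ℕ → ℤ) (hA.sum_card_filter_eq_one_sq hk)
    have hk' : (k : ℤ) + 1 = 2 * lam := by exact_mod_cast hkl
    push_cast at h₁ h₂
    simp only [dev, sub_sq, sum_add_distrib, sum_sub_distrib, ← sum_mul, ← mul_sum, sum_const,
      card_univ, Fintype.card_fin, nsmul_eq_mul]
    push_cast
    linear_combination h₂ - 2 * (lam : ℤ) * h₁ + ((lam : ℤ) * k - 2 * lam ^ 2) * hk'
  have hdev_zero : ∀ i ∈ ({i | A i = 0} : Finset _), dev i = lam ^ 2 := by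
    intro i hi
    simp only [mem_filter, mem_univ, true_and] at hi
    simp [dev, hi]
  have hrest : ∑ i ∈ {i | A i ≠ 0}, dev i = 0 := by
    have hsplit := sum_filter_add_sum_filter_not univ (fun i => A i = 0) dev
    rw [sum_congr rfl hdev_zero, sum_const, nsmul_eq_mul, htotal] at hsplit
    have hnonneg : 0 ≤ ∑ i ∈ {i | A i ≠ 0}, dev i := sum_nonneg fun i _ => sq_nonneg _
    have : (2 : ℤ) ≤ #{i | A i = 0} := by exact_mod_cast hzero
    nlinarith [sq_nonneg (lam : ℤ)]
  have := (sum_eq_zero_iff_of_nonneg fun i _ => sq_nonneg _).mp hrest i (by simpa using hi)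
  simp only [pow_eq_zero_iff two_ne_zero, sub_eq_zero] at this
  exact_mod_cast this

theorem IsOA.exists_isBIBD (hA : IsOA lam k 2 A) (hk : 2 ≤ k) (hkl : k + 1 = 2 * lam)
    (hzero : 2 ≤ #{i | A i = 0}) :
    ∃ b, ∃ B : Fin b → Finset (Fin k), IsBIBD k b lam lam B := by
  refine exists_isBIBD_of_finset {i | A i ≠ 0} (fun i => {c | A i c = 1})
    (fun i hi => hA.card_filter_eq_one_of_ne_zero hk hkl hzero (mem_filter.mp hi).2)
    fun x y hxy => ?_
  rw [filter_filter]
  convert hA x y hxy 1 1 using 2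
  ext i
  simp only [mem_filter, mem_univ, true_and, and_iff_right_iff_imp]
  intro h h0
  simp [h0] at h

end Binary

theorem IsBIBD.exists_isOA_two {v b κ μ : ℕ} {B : Fin b → Finset (Fin v)}
    (hB : IsBIBD v b κ μ B) (hκ : 0 < κ) (hr : ∀ x, #{i | x ∈ B i} = 2 * μ) (z : ℕ)
    (hz : b + z = μ * 2 ^ 2) :
    ∃ A : Fin (μ * 2 ^ 2) → Fin v → Fin 2, IsOA μ v 2 A ∧ #{i | A i = 0} = z := by
  let incidence : Fin b → Fin v → Fin 2 := fun i c => if c ∈ B i then 1 else 0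
  let A : Fin (μ * 2 ^ 2) → Fin v → Fin 2 :=
    fun j => Fin.append incidence (fun _ => 0) (finCongr hz.symm j)
  have hcount : ∀ (P : (Fin v → Fin 2) → Prop) [DecidablePred P],
      #{j | P (A j)} = #{i | P (incidence i)} + if P 0 then z else 0 := by
    intro P _
    simp only [card_filter, A]
    rw [(finCongr hz.symm).sum_comp fun j =>
      if P (Fin.append incidence (fun _ => 0) j) then 1 else 0, Fin.sum_univ_add]
    simp [Fin.append_left, Fin.append_right]
  refine ⟨A, isOA_two_of_card_filter_eq_one (fun c => ?_) (fun c₁ c₂ hc => ?_), ?_⟩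
  · rw [hcount (fun r => r c = 1)]
    simpa [incidence] using hr c
  · rw [hcount (fun r => r c₁ = 1 ∧ r c₂ = 1)]
    simpa [incidence] using hB.2 c₁ c₂ hc
  · rw [hcount (· = 0), if_pos rfl, filter_false_of_mem, card_empty, zero_add]
    intro i _ hi
    obtain ⟨c, hc⟩ := card_pos.mp (hB.1 i ▸ hκ)
    simpa [incidence, hc] using congrFun hi c

theorem stmt6 (t : ℕ) (ht : 0 < t) :
    (∃ A : Fin ((2 * t + 1) * 2 ^ 2) → Fin (4 * t + 1) → Fin 2,
      IsOA (2 * t + 1) (4 * t + 1) 2 A ∧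
      ∃ r, (Finset.univ.filter (fun i => A i = r)).card = 2) ↔
    (∃ b : ℕ, ∃ B : Fin b → Finset (Fin (4 * t + 1)),
      IsBIBD (4 * t + 1) b (2 * t + 1) (2 * t + 1) B) := by
  constructor
  · rintro ⟨A, hA, r, hr⟩
    have hA' := hA.comp_perm fun c => Equiv.subRight (r c)
    refine hA'.exists_isBIBD (by omega) (by ring) (le_of_eq ?_)
    simp only [Equiv.subRight_apply, funext_iff, Pi.zero_apply, sub_eq_zero, ← hr]
  · rintro ⟨b, B, hB⟩
    have hr : ∀ x, #{i | x ∈ B i} = 2 * (2 * t + 1) := fun x => by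
      have h := hB.card_filter_mem_mul x
      rw [Nat.add_sub_cancel, Nat.add_sub_cancel] at h
      exact Nat.eq_of_mul_eq_mul_right (by omega : 0 < 2 * t) (by rw [h]; ring)
    have hb : b = 8 * t + 2 := Nat.eq_of_mul_eq_mul_right (by omega : 0 < 2 * t + 1) <| by
      rw [hB.mul_eq_mul_of_card_filter_mem hr]; ring
    obtain ⟨A, hA, hzero⟩ := hB.exists_isOA_two (by omega) hr 2 (by rw [hb]; ring)
    exact ⟨A, hA, 0, hzero⟩
end

section
/- If there exists a Hadamard matrix of order 8t+4 (t a positive integer), then there exists a (4t+1, 2t+1, 2t+1)-BIBD, and hence an OA_{2t+1}(4t+1,2) with a row repeated 2 times. -/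
open Finset

theorem Finset.card_filter_comp_equiv {α γ : Type*} [Fintype γ] {S : Finset α} (e : γ ≃ S)
    (p : α → Prop) [DecidablePred p] : #{x | p (e x)} = #{a ∈ S | p a} := by
  refine card_bij (fun x _ => (e x : α)) ?_ (fun x _ y _ h => e.injective (Subtype.ext h)) ?_
  · intro x hx
    simpa using hx
  · intro a ha
    rw [mem_filter] at ha
    exact ⟨e.symm ⟨a, ha.1⟩, by simpa using ha.2, by simp⟩

theorem exists_isBIBD_of_card_eq {α β : Type*} [DecidableEq α] (S : Finset α) (T : Finset β)
    (B : β → Finset α) {v κ μ : ℕ} (hS : #S = v) (hBS : ∀ r ∈ T, B r ⊆ S)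
    (hκ : ∀ r ∈ T, #(B r) = κ)
    (hμ : ∀ x ∈ S, ∀ y ∈ S, x ≠ y → #{r ∈ T | x ∈ B r ∧ y ∈ B r} = μ) :
    ∃ b B', IsBIBD v b κ μ B' := by
  let σ : Fin v ≃ S := (S.equivFinOfCardEq hS).symm
  let τ : Fin #T ≃ T := T.equivFin.symm
  refine ⟨#T, fun m => {x | ↑(σ x) ∈ B (τ m)}, fun m => ?_, fun x y hxy => ?_⟩
  · rw [card_filter_comp_equiv σ (· ∈ B (τ m)), filter_mem_eq_inter,
      inter_eq_right.mpr (hBS _ (τ m).2)]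
    exact hκ _ (τ m).2
  · simp only [mem_filter, mem_univ, true_and]
    rw [card_filter_comp_equiv τ (fun r => ↑(σ x) ∈ B r ∧ ↑(σ y) ∈ B r)]
    exact hμ _ (σ x).2 _ (σ y).2 (by simpa [Subtype.ext_iff] using σ.injective.ne hxy)

theorem exists_isOA_of_card_eq {ρ α V : Type*} [Fintype ρ] [Fintype V] [DecidableEq V]
    (A : ρ → α → V) (S : Finset α) {lam k n m : ℕ} (hρ : Fintype.card ρ = lam * n ^ 2)
    (hS : #S = k) (hV : Fintype.card V = n)
    (hA : ∀ c₁ ∈ S, ∀ c₂ ∈ S, c₁ ≠ c₂ → ∀ x y, #{i | A i c₁ = x ∧ A i c₂ = y} = lam)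
    (r : α → V) (hr : #{i | ∀ c ∈ S, A i c = r c} = m) :
    ∃ A' : Fin (lam * n ^ 2) → Fin k → Fin n, IsOA lam k n A' ∧ ∃ r', #{i | A' i = r'} = m := by
  let eρ : Fin (lam * n ^ 2) ≃ ρ := (Fintype.equivFinOfCardEq hρ).symm
  let σ : Fin k ≃ S := (S.equivFinOfCardEq hS).symm
  let eV : V ≃ Fin n := Fintype.equivFinOfCardEq hV
  refine ⟨fun i c => eV (A (eρ i) (σ c)), fun c₁ c₂ hc x y => ?_, fun c => eV (r (σ c)), ?_⟩
  · have := hA _ (σ c₁).2 _ (σ c₂).2 (by simpa [Subtype.ext_iff] using σ.injective.ne hc)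
      (eV.symm x) (eV.symm y)
    exact (card_equiv eρ (by simp [← Equiv.eq_symm_apply])).trans this
  · refine (card_equiv eρ fun i => ?_).trans hr
    simp only [mem_filter, mem_univ, true_and, funext_iff, EmbeddingLike.apply_eq_iff_eq]
    exact σ.forall_congr_left.trans (by simp)

theorem Int.one_add_mul_eq_ite {a x : ℤ} (ha : a = 1 ∨ a = -1) (hx : x = 1 ∨ x = -1) :
    1 + a * x = if x = a then 2 else 0 := by
  rcases ha with rfl | rfl <;> rcases hx with rfl | rfl <;> norm_num

namespace Matrix

variable {n R : Type*} [Fintype n] [DecidableEq n]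

section Semiring

variable [Semiring R] [StarRing R] {A : Matrix n n R}

theorem IsHadamard.diagonal_mul {d : n → R} (hd : ∀ i, d i ∈ unitary R) (hA : A.IsHadamard) :
    (diagonal d * A).IsHadamard := by
  have hdd : diagonal d * (diagonal d)ᴴ = 1 := by
    simp [diagonal_conjTranspose, diagonal_mul_diagonal, Unitary.mul_star_self_of_mem (hd _)]
  have hdd' : (diagonal d)ᴴ * diagonal d = 1 := by
    simp [diagonal_conjTranspose, diagonal_mul_diagonal, Unitary.star_mul_self_of_mem (hd _)]
  refine ⟨fun i j => ?_, ?_, ?_⟩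
  · simpa [diagonal_mul] using Submonoid.mul_mem _ (hd i) (hA.apply_mem i j)
  · rw [Matrix.conjTranspose_mul, Matrix.mul_assoc, ← Matrix.mul_assoc A, hA.mul_conjTranspose,
      Nat.cast_smul_eq_nsmul, Matrix.smul_mul, Matrix.one_mul, Matrix.mul_smul, hdd]
  · rw [Matrix.conjTranspose_mul, Matrix.mul_assoc, ← Matrix.mul_assoc _ (diagonal d), hdd',
      Matrix.one_mul, hA.conjTranspose_mul]

theorem IsHadamard.mul_diagonal {d : n → R} (hd : ∀ i, d i ∈ unitary R) (hA : A.IsHadamard) :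
    (A * diagonal d).IsHadamard := by
  simpa [Matrix.conjTranspose_mul, diagonal_conjTranspose] using
    (hA.conjTranspose.diagonal_mul (d := star d) fun i => Unitary.star_mem (hd i)).conjTranspose

theorem IsHadamard.exists_normalized (hA : A.IsHadamard) (z : n) :
    ∃ G : Matrix n n R, G.IsHadamard ∧ (∀ j, G z j = 1) ∧ ∀ i, G i z = 1 := by
  set A' := diagonal (fun i => star (A i z)) * A
  have hA' : A'.IsHadamard := hA.diagonal_mul fun i => Unitary.star_mem (hA.apply_mem i z)
  have hcol : ∀ i, A' i z = 1 := fun i => by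
    simp [A', Unitary.star_mul_self_of_mem (hA.apply_mem i z)]
  refine ⟨A' * diagonal (fun j => star (A' z j)),
    hA'.mul_diagonal fun j => Unitary.star_mem (hA'.apply_mem z j), fun j => ?_, fun i => ?_⟩
  · simp [Unitary.mul_star_self_of_mem (hA'.apply_mem z j)]
  · simp [hcol]

theorem IsHadamard.sum_mul_star_eq_zero (hA : A.IsHadamard) {i k : n} (hik : i ≠ k) :
    ∑ j, A i j * star (A k j) = 0 := by
  simpa [mul_apply, hik] using congr_fun (congr_fun hA.mul_conjTranspose i) k

end Semiring

section Int

variable {A : Matrix n n ℤ}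

theorem IsHadamard.apply_eq_one_or_eq_neg_one (hA : A.IsHadamard) (i j : n) :
    A i j = 1 ∨ A i j = -1 :=
  Unitary.mem_iff_eq_one_or_eq_neg_one.mp (hA.apply_mem i j)

theorem IsHadamard.sum_mul_eq_zero (hA : A.IsHadamard) {i k : n} (hik : i ≠ k) :
    ∑ j, A i j * A k j = 0 := by
  simpa using hA.sum_mul_star_eq_zero hik

theorem IsHadamard.sum_eq_zero (hA : A.IsHadamard) {z i : n} (hz : ∀ j, A z j = 1)
    (hi : i ≠ z) : ∑ j, A i j = 0 := by
  simpa [hz] using hA.sum_mul_eq_zero hi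

theorem IsHadamard.two_mul_card_filter_eq (hA : A.IsHadamard) {z i : n}
    (hz : ∀ j, A z j = 1) (hi : i ≠ z) {a : ℤ} (ha : a = 1 ∨ a = -1) :
    2 * #{j | A i j = a} = Fintype.card n := by
  have key : ∑ j, (1 + a * A i j) = 2 * #{j | A i j = a} := by
    simp_rw [Int.one_add_mul_eq_ite ha (hA.apply_eq_one_or_eq_neg_one _ _)]
    simp [sum_ite, mul_comm]
  have : ∑ j, (1 + a * A i j) = Fintype.card n := by
    simp [sum_add_distrib, ← mul_sum, hA.sum_eq_zero hz hi]
  exact_mod_cast key.symm.trans this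

theorem IsHadamard.four_mul_card_filter_eq_and_eq (hA : A.IsHadamard) {z i k : n}
    (hz : ∀ j, A z j = 1) (hik : i ≠ k) (hi : i ≠ z) (hk : k ≠ z) {a b : ℤ}
    (ha : a = 1 ∨ a = -1) (hb : b = 1 ∨ b = -1) :
    4 * #{j | A i j = a ∧ A k j = b} = Fintype.card n := by
  have key : ∑ j, (1 + a * A i j) * (1 + b * A k j) = 4 * #{j | A i j = a ∧ A k j = b} := by
    simp_rw [Int.one_add_mul_eq_ite ha (hA.apply_eq_one_or_eq_neg_one _ _),
      Int.one_add_mul_eq_ite hb (hA.apply_eq_one_or_eq_neg_one _ _), ite_zero_mul_ite_zero]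
    simp [sum_ite, mul_comm]
  have : ∑ j, (1 + a * A i j) * (1 + b * A k j) = Fintype.card n := by
    have expand : ∀ j, (1 + a * A i j) * (1 + b * A k j) =
        1 + a * A i j + b * A k j + a * b * (A i j * A k j) := fun j => by ring
    simp [expand, sum_add_distrib, ← mul_sum, hA.sum_eq_zero hz hi, hA.sum_eq_zero hz hk,
      hA.sum_mul_eq_zero hik]
  exact_mod_cast key.symm.trans this

end Int

section Normalized

variable {G : Matrix n n ℤ} {z k : n}

theorem IsHadamard.two_mul_card_filter_eq_one_and_ne_add_one (hG : G.IsHadamard)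
    (hrow : ∀ j, G z j = 1) (hcol : ∀ i, G i z = 1) (hkz : k ≠ z) :
    2 * (#{j | G k j = 1 ∧ j ≠ z} + 1) = Fintype.card n := by
  rw [← filter_filter, filter_ne', card_erase_add_one (by simpa using hcol k)]
  exact hG.two_mul_card_filter_eq hrow hkz (Or.inl rfl)

theorem IsHadamard.four_mul_card_filter_block (hG : G.IsHadamard)
    (hrow : ∀ j, G z j = 1) (hcol : ∀ i, G i z = 1) (hkz : k ≠ z) {r : n} (hrz : r ≠ z)
    (hrk : r ≠ k) :
    4 * #{j | (G k j = 1 ∧ j ≠ z) ∧ G r j = -1} = Fintype.card n := by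
  have hiff : ∀ j, (G k j = 1 ∧ j ≠ z) ∧ G r j = -1 ↔ G k j = 1 ∧ G r j = -1 := by
    refine fun j => ⟨fun h => ⟨h.1.1, h.2⟩, fun h => ⟨⟨h.1, ?_⟩, h.2⟩⟩
    rintro rfl
    simp [hcol r] at h
  rw [filter_congr fun j _ => hiff j]
  exact hG.four_mul_card_filter_eq_and_eq hrow hrk.symm hkz hrz (Or.inl rfl) (Or.inr rfl)

theorem IsHadamard.four_mul_card_filter_pair (hG : G.IsHadamard)
    (hrow : ∀ j, G z j = 1) (hcol : ∀ i, G i z = 1) {x y : n} (hx : G k x = 1) (hxz : x ≠ z)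
    (hy : G k y = 1) (hyz : y ≠ z) (hxy : x ≠ y) :
    4 * #{r | (r ≠ z ∧ r ≠ k) ∧ G r x = -1 ∧ G r y = -1} = Fintype.card n := by
  have hiff : ∀ r, (r ≠ z ∧ r ≠ k) ∧ G r x = -1 ∧ G r y = -1 ↔ G r x = -1 ∧ G r y = -1 := by
    intro r
    refine ⟨And.right, fun h => ⟨⟨?_, ?_⟩, h⟩⟩ <;> rintro rfl <;> simp [hrow, hx] at h
  rw [filter_congr fun r _ => hiff r]
  exact hG.transpose.four_mul_card_filter_eq_and_eq hcol hxy hxz hyz (Or.inr rfl) (Or.inr rfl)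

theorem IsHadamard.forall_eq_one_imp_iff (hG : G.IsHadamard)
    (hrow : ∀ j, G z j = 1) (hcol : ∀ i, G i z = 1) (hkz : k ≠ z) {i : n} :
    (∀ j, G k j = 1 → j ≠ z → G i j = 1) ↔ i = z ∨ i = k := by
  refine ⟨fun hi => ?_, ?_⟩
  · by_contra! hne
    have hsub : ({j | G k j = 1} : Finset n) ⊆ ({j | G k j = 1 ∧ G i j = 1} : Finset n) := by
      intro j hj
      simp only [mem_filter, mem_univ, true_and] at hj ⊢
      exact ⟨hj, if hjz : j = z then hjz ▸ hcol i else hi j hj hjz⟩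
    have h2 := hG.two_mul_card_filter_eq hrow hkz (Or.inl rfl)
    have h4 := hG.four_mul_card_filter_eq_and_eq hrow hne.2.symm hkz hne.1 (Or.inl rfl) (Or.inl rfl)
    have hpos : 0 < Fintype.card n := Fintype.card_pos_iff.mpr ⟨z⟩
    have := card_le_card hsub
    omega
  · rintro (rfl | rfl) j hj _
    exacts [hrow j, hj]

end Normalized

theorem IsHadamard.exists_isBIBD {A : Matrix n n ℤ} (hA : A.IsHadamard) {u v : ℕ}
    (hn : Fintype.card n = 4 * u) (hv : v + 1 = 2 * u) : ∃ b B, IsBIBD v b u u B := by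
  obtain ⟨z, k, hzk⟩ := Fintype.exists_pair_of_one_lt_card (α := n) (by omega)
  obtain ⟨G, hG, hrow, hcol⟩ := hA.exists_normalized z
  refine exists_isBIBD_of_card_eq {j | G k j = 1 ∧ j ≠ z} {r | r ≠ z ∧ r ≠ k}
    (fun r => {j | (G k j = 1 ∧ j ≠ z) ∧ G r j = -1}) ?_ (fun r _ => ?_) (fun r hr => ?_)
    (fun x hx y hy hxy => ?_)
  · have := hG.two_mul_card_filter_eq_one_and_ne_add_one hrow hcol hzk.symm
    omega
  · intro j hj
    exact mem_filter.mpr ⟨mem_univ j, (mem_filter.mp hj).2.1⟩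
  · rw [mem_filter] at hr
    have := hG.four_mul_card_filter_block hrow hcol hzk.symm hr.2.1 hr.2.2
    omega
  · simp only [mem_filter, mem_univ, true_and] at hx hy
    have := hG.four_mul_card_filter_pair hrow hcol hx.1 hx.2 hy.1 hy.2 hxy
    simp only [mem_filter, mem_univ, true_and, filter_filter, hx, hy, ne_eq, not_false_eq_true,
      and_self] at this ⊢
    omega

theorem IsHadamard.exists_isOA {A : Matrix n n ℤ} (hA : A.IsHadamard) {u v : ℕ}
    (hn : Fintype.card n = 4 * u) (hv : v + 1 = 2 * u) :
    ∃ A' : Fin (u * 2 ^ 2) → Fin v → Fin 2, IsOA u v 2 A' ∧ ∃ r, #{i | A' i = r} = 2 := by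
  obtain ⟨z, k, hzk⟩ := Fintype.exists_pair_of_one_lt_card (α := n) (by omega)
  obtain ⟨G, hG, hrow, hcol⟩ := hA.exists_normalized z
  have hunit (i j : n) : IsUnit (G i j) := Int.isUnit_iff.mpr (hG.apply_eq_one_or_eq_neg_one i j)
  have hunit_eq (i j : n) (a : ℤˣ) : (hunit i j).unit = a ↔ G i j = a := by
    simp [Units.ext_iff]
  refine exists_isOA_of_card_eq (fun i j => (hunit i j).unit) {j | G k j = 1 ∧ j ≠ z}
    (by rw [hn]; ring) ?_ Fintype.card_units_int (fun x hx y hy hxy a b => ?_) 1 ?_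
  · have := hG.two_mul_card_filter_eq_one_and_ne_add_one hrow hcol hzk.symm
    omega
  · simp only [mem_filter, mem_univ, true_and] at hx hy
    have : 4 * #{i | G i x = a ∧ G i y = b} = Fintype.card n :=
      hG.transpose.four_mul_card_filter_eq_and_eq hcol hxy hx.2 hy.2
        (Int.isUnit_iff.mp a.isUnit) (Int.isUnit_iff.mp b.isUnit)
    simp only [hunit_eq]
    omega
  · simp only [hunit_eq, Pi.one_apply, Units.val_one, mem_filter, mem_univ, true_and, and_imp,
      hG.forall_eq_one_imp_iff hrow hcol hzk.symm]
    rw [filter_or, filter_eq', filter_eq']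
    simp [card_pair hzk]

end Matrix

theorem stmt7_general (t : ℕ)
    (H : Matrix (Fin (8 * t + 4)) (Fin (8 * t + 4)) ℤ)
    (hent : ∀ i j, H i j = 1 ∨ H i j = -1)
    (hH : H * H.transpose = ((8 * t + 4 : ℤ)) • (1 : Matrix (Fin (8 * t + 4)) (Fin (8 * t + 4)) ℤ)) :
    (∃ b : ℕ, ∃ B : Fin b → Finset (Fin (4 * t + 1)),
      IsBIBD (4 * t + 1) b (2 * t + 1) (2 * t + 1) B) ∧
    (∃ A : Fin ((2 * t + 1) * 2 ^ 2) → Fin (4 * t + 1) → Fin 2,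
      IsOA (2 * t + 1) (4 * t + 1) 2 A ∧
      ∃ r, (Finset.univ.filter (fun i => A i = r)).card = 2) := by
  have hcard : Fintype.card (Fin (8 * t + 4)) = 4 * (2 * t + 1) := by
    rw [Fintype.card_fin]; ring
  have hHad : H.IsHadamard :=
    .of_mul_conjTranspose (fun i j => Unitary.mem_iff_eq_one_or_eq_neg_one.mpr (hent i j))
      (by simpa using hH) (IsRegular.of_ne_zero (by rw [hcard]; positivity))
  exact ⟨hHad.exists_isBIBD hcard (by ring), hHad.exists_isOA hcard (by ring)⟩

theorem stmt7 (t : ℕ) (ht : 0 < t)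
    (H : Matrix (Fin (8 * t + 4)) (Fin (8 * t + 4)) ℤ)
    (hent : ∀ i j, H i j = 1 ∨ H i j = -1)
    (hH : H * H.transpose = ((8 * t + 4 : ℤ)) • (1 : Matrix (Fin (8 * t + 4)) (Fin (8 * t + 4)) ℤ)) :
    (∃ b : ℕ, ∃ B : Fin b → Finset (Fin (4 * t + 1)),
      IsBIBD (4 * t + 1) b (2 * t + 1) (2 * t + 1) B) ∧
    (∃ A : Fin ((2 * t + 1) * 2 ^ 2) → Fin (4 * t + 1) → Fin 2,
      IsOA (2 * t + 1) (4 * t + 1) 2 A ∧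
      ∃ r, (Finset.univ.filter (fun i => A i = r)).card = 2) :=
  stmt7_general t H hent hH
end

section
/- Let k, n be integers with n ≥ 2, ā = (k−1)/n a positive integer, λ = C(k−2, ā−1)(n−1)^{k−ā−1} and m = λ − C(k−2, ā−2)(n−1)^{k−ā}. Then m/λ = n²/(k(n−1)+1), i.e., m(k(n−1)+1) = λn². -/
/-!
Write `k = n a + 1`, `d = n - 1` and `e = a d`, so that `k - 2 = e + a - 1` and `k - a = e + 1`.
The ratio of consecutive binomial coefficients, `C(k-2, a-2) (e+1) = C(k-2, a-1) (a-1)`,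
turns the subtracted term into `λ (a-1) d / (e+1)`, hence `m (e+1) = λ (e + 1 - (a-1) d) = λ n`.
Finally `k (n-1) + 1 = n (e+1)`.
-/

theorem ite_choose_mul_pow_mul (N a e d : ℕ) (ha : 1 ≤ a) (hN : N + 1 = e + a) :
    (if 2 ≤ a then N.choose (a - 2) * d ^ (e + 1) else 0) * (e + 1)
      = N.choose (a - 1) * d ^ e * ((a - 1) * d) := by
  obtain ⟨c, rfl⟩ | ⟨c, rfl⟩ : a = 1 ∨ ∃ c, a = c + 2 := by
    rcases Nat.lt_or_ge a 2 with h | h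
    · exact .inl (by omega)
    · exact .inr ⟨a - 2, by omega⟩
  · simp
  · have hNc : N - c = e + 1 := by omega
    have key := Nat.choose_succ_right_eq N c
    rw [hNc] at key
    simp only [le_add_iff_nonneg_left, Nat.zero_le, if_true, Nat.add_sub_cancel,
      show c + 2 - 1 = c + 1 by omega]
    calc N.choose c * d ^ (e + 1) * (e + 1) = N.choose c * (e + 1) * d ^ e * d := by ring
      _ = N.choose (c + 1) * d ^ e * ((c + 1) * d) := by rw [← key]; ring

theorem choose_mul_pow_sub_mul (N a e d : ℕ) (ha : 1 ≤ a) (hN : N + 1 = e + a)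
    (he : e = a * d) :
    (N.choose (a - 1) * d ^ e - (if 2 ≤ a then N.choose (a - 2) * d ^ (e + 1) else 0)) * (e + 1)
      = N.choose (a - 1) * d ^ e * (d + 1) := by
  rw [Nat.sub_mul, ite_choose_mul_pow_mul N a e d ha hN, ← Nat.mul_sub]
  congr 1
  obtain ⟨b, rfl⟩ : ∃ b, a = b + 1 := ⟨a - 1, by omega⟩
  subst he
  rw [Nat.add_sub_cancel]
  exact Nat.sub_eq_of_eq_add (by ring)

theorem stmt10_general (k n : ℕ) (hdvd : n ∣ k - 1)
    (ha : 1 ≤ (k - 1) / n) :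
    (Nat.choose (k - 2) ((k - 1) / n - 1) * (n - 1) ^ (k - (k - 1) / n - 1)
        - (if 2 ≤ (k - 1) / n then
            Nat.choose (k - 2) ((k - 1) / n - 2) * (n - 1) ^ (k - (k - 1) / n)
          else 0)) * (k * (n - 1) + 1)
      = Nat.choose (k - 2) ((k - 1) / n - 1) * (n - 1) ^ (k - (k - 1) / n - 1) * n ^ 2 := by
  have hn : 0 < n := Nat.pos_of_ne_zero (by rintro rfl; simp at ha)
  obtain ⟨a, hka⟩ := hdvd
  rw [hka, Nat.mul_div_cancel_left a hn] at ha ⊢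
  obtain ⟨d, rfl⟩ : ∃ d, n = d + 1 := ⟨n - 1, by omega⟩
  have hk : k = a * d + a + 1 := by
    have : (d + 1) * a = a * d + a := by ring
    omega
  subst hk
  have hexp : a * d + a + 1 - a - 1 = a * d := by omega
  have hfactor : (a * d + a + 1) * d + 1 = (a * d + 1) * (d + 1) := by ring
  rw [hexp, Nat.add_sub_cancel, show a * d + a + 1 - a = a * d + 1 by omega, hfactor,
    ← mul_assoc, choose_mul_pow_sub_mul _ a _ d ha (by omega) rfl]
  ring

theorem stmt10 (k n : ℕ) (hk : 2 ≤ k) (hn : 2 ≤ n) (hdvd : n ∣ k - 1)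
    (ha : 1 ≤ (k - 1) / n) (hkn : n ^ 2 ≤ k * (n - 1) + 1) :
    (Nat.choose (k - 2) ((k - 1) / n - 1) * (n - 1) ^ (k - (k - 1) / n - 1)
        - (if 2 ≤ (k - 1) / n then
            Nat.choose (k - 2) ((k - 1) / n - 2) * (n - 1) ^ (k - (k - 1) / n)
          else 0)) * (k * (n - 1) + 1)
      = Nat.choose (k - 2) ((k - 1) / n - 1) * (n - 1) ^ (k - (k - 1) / n - 1) * n ^ 2 :=
  stmt10_general k n hdvd ha
end

section
/- Suppose n² ≤ k(n−1)+1 and ā = (k−1)/n is a positive integer. Then there exists an OA_λ(k,n) with λ = C(k−2, ā−1)(n−1)^{k−ā−1} containing a row repeated m = λn²/(k(n−1)+1) times, namely the array of all k-tuples over {0,1,…,n−1} having exactly ā entries equal to 0, together with m additional rows consisting entirely of 0's. -/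
open Finset

section Hamming

variable {α β : Type*} [Fintype α] [DecidableEq α] [Fintype β] [DecidableEq β]

theorem card_filter_apply_eq_and (c : α) (x : β) (Q : ({j // j ≠ c} → β) → Prop)
    [DecidablePred Q] : #{v : α → β | v c = x ∧ Q fun j => v j} = #{u | Q u} := by
  rw [card_equiv (Equiv.funSplitAt c β) (t := {x} ×ˢ ({u | Q u} : Finset _))
    (by simp [and_comm, eq_comm]),
    card_product, card_singleton, one_mul]

variable [Zero β]

theorem card_filter_support_eq (s : Finset α) :
    #{v : α → β | ({i | v i ≠ 0} : Finset α) = s} = (Fintype.card β - 1) ^ #s := by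
  have : ({v : α → β | ({i | v i ≠ 0} : Finset α) = s} : Finset _)
      = Fintype.piFinset fun i => if i ∈ s then {0}ᶜ else {0} := by
    ext v
    simp only [mem_filter, mem_univ, true_and, Fintype.mem_piFinset, Finset.ext_iff]
    refine forall_congr' fun i => ?_
    split_ifs <;> simp [*]
  simp only [this, Fintype.card_piFinset, apply_ite Finset.card, card_compl, card_singleton]
  rw [prod_ite_mem, univ_inter, prod_const]

theorem card_filter_hammingNorm_eq (w : ℕ) :
    #{v : α → β | hammingNorm v = w} = (Fintype.card α).choose w * (Fintype.card β - 1) ^ w := by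
  rw [card_eq_sum_card_fiberwise (f := fun v : α → β => ({i | v i ≠ 0} : Finset α))
    (t := powersetCard w univ) (fun v hv => by simpa [hammingNorm] using hv)]
  rw [sum_congr rfl fun s hs => ?_, sum_const, card_powersetCard, card_univ, smul_eq_mul]
  rw [filter_filter, ← (mem_powersetCard.mp hs).2, ← card_filter_support_eq]
  congr 1
  refine filter_congr fun v _ => ⟨And.right, fun h => ⟨by rw [hammingNorm, h], h⟩⟩

omit [Fintype β] in
theorem hammingNorm_eq_hammingNorm_restrict_add (v : α → β) (c : α) :
    hammingNorm v = hammingNorm (fun j : {j // j ≠ c} => v j) + if v c = 0 then 0 else 1 := by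
  simp only [hammingNorm, card_filter, Fintype.sum_eq_add_sum_subtype_ne _ c, ne_eq, ite_not]
  ring

theorem card_filter_apply_eq_apply_eq_hammingNorm_eq {c₁ c₂ : α} (hc : c₁ ≠ c₂) (x y : β)
    (w : ℕ) :
    #{v : α → β | v c₁ = x ∧ v c₂ = y ∧
        hammingNorm v = w + ((if x = 0 then 0 else 1) + if y = 0 then 0 else 1)}
      = (Fintype.card α - 2).choose w * (Fintype.card β - 1) ^ w := by
  let c₂' : {j // j ≠ c₁} := ⟨c₂, hc.symm⟩
  calc _ = #{u : {j // j ≠ c₁} → β | u c₂' = y ∧ hammingNorm u = w + if y = 0 then 0 else 1} := by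
        refine .trans (congrArg card (filter_congr fun v _ => and_congr_right fun hx =>
          and_congr_right fun _ => ?_)) (card_filter_apply_eq_and c₁ x
            fun u => u c₂' = y ∧ hammingNorm u = w + if y = 0 then 0 else 1)
        rw [hammingNorm_eq_hammingNorm_restrict_add v c₁, hx]
        omega
    _ = #{u' : {j // j ≠ c₂'} → β | hammingNorm u' = w} := by
        refine .trans (congrArg card (filter_congr fun u _ => and_congr_right fun hy => ?_))
          (card_filter_apply_eq_and c₂' y fun u' => hammingNorm u' = w)
        rw [hammingNorm_eq_hammingNorm_restrict_add u c₂', hy]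
        omega
    _ = _ := by
        rw [card_filter_hammingNorm_eq]
        simp [Fintype.card_subtype_compl, Nat.sub_sub]

end Hamming

theorem Multiset.exists_univ_val_map_eq {β : Type*} {T : ℕ} (M : Multiset β)
    (hM : Multiset.card M = T) : ∃ A : Fin T → β, univ.val.map A = M := by
  obtain ⟨l, rfl⟩ : ∃ l : List β, (l : Multiset β) = M := Quotient.exists_rep M
  obtain rfl : l.length = T := hM
  exact ⟨l.get, by rw [Fin.univ_val_map, List.ofFn_get]⟩

theorem card_filter_univ_eq_countP {β : Type*} {T : ℕ} {A : Fin T → β} {M : Multiset β}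
    (hA : univ.val.map A = M) (P : β → Prop) [DecidablePred P] :
    #{i | P (A i)} = M.countP P := by
  rw [← hA, Multiset.countP_map]
  rfl

theorem Multiset.card_eq_sum_countP_apply_eq_apply_eq {α β : Type*} [Fintype β] [DecidableEq β]
    (M : Multiset (α → β)) (c₁ c₂ : α) :
    Multiset.card M = ∑ x, ∑ y, M.countP fun v => v c₁ = x ∧ v c₂ = y := by
  rw [← Multiset.card_map (fun v => (v c₁, v c₂)),
    ← sum_count_eq_card (s := univ) fun _ _ => mem_univ _, Fintype.sum_prod_type]
  simp only [Multiset.count_map, Prod.ext_iff, eq_comm, Multiset.countP_eq_card_filter]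

theorem exists_isOA_of_countP_eq {k n lam : ℕ} [NeZero n] (hk : 2 ≤ k)
    (M : Multiset (Fin k → Fin n))
    (hM : ∀ c₁ c₂ : Fin k, c₁ ≠ c₂ → ∀ x y : Fin n,
      M.countP (fun v => v c₁ = x ∧ v c₂ = y) = lam) :
    ∃ A : Fin (lam * n ^ 2) → Fin k → Fin n, IsOA lam k n A ∧ #{i | A i = 0} = M.count 0 := by
  have hcard : Multiset.card M = lam * n ^ 2 := by
    obtain ⟨c₁, c₂, hc⟩ := Fintype.exists_pair_of_one_lt_card (α := Fin k)
      (by rw [Fintype.card_fin]; omega)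
    simp only [M.card_eq_sum_countP_apply_eq_apply_eq c₁ c₂, hM c₁ c₂ hc, sum_const, card_univ,
      Fintype.card_fin, smul_eq_mul]
    ring
  obtain ⟨A, hA⟩ := M.exists_univ_val_map_eq hcard
  refine ⟨A, fun c₁ c₂ hc x y => ?_, ?_⟩
  · rw [card_filter_univ_eq_countP hA (fun v => v c₁ = x ∧ v c₂ = y), hM c₁ c₂ hc]
  · rw [card_filter_univ_eq_countP hA (· = 0), Multiset.count]
    exact Multiset.countP_congr rfl fun _ _ => propext eq_comm

theorem Nat.choose_pred_mul_pow_eq {N j p : ℕ} (hj : j = p * (N + 1 - j)) :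
    N.choose (j - 1) * p ^ (j - 1) = N.choose j * p ^ j := by
  rcases Nat.eq_zero_or_pos j with rfl | hj₁
  · rfl
  have hr : 0 < N + 1 - j := by
    by_contra h
    rw [Nat.eq_zero_of_not_pos h, mul_zero] at hj
    omega
  have hc := Nat.choose_succ_right_eq N (j - 1)
  rw [Nat.sub_add_cancel hj₁, show N - (j - 1) = N + 1 - j by omega] at hc
  refine Nat.eq_of_mul_eq_mul_right hr ?_
  calc N.choose (j - 1) * p ^ (j - 1) * (N + 1 - j)
      = N.choose j * j * p ^ (j - 1) := by rw [hc]; ring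
    _ = N.choose j * (p * (N + 1 - j)) * p ^ (j - 1) := by rw [← hj]
    _ = N.choose j * p ^ (j - 1 + 1) * (N + 1 - j) := by ring
    _ = N.choose j * p ^ j * (N + 1 - j) := by rw [Nat.sub_add_cancel hj₁]

theorem Nat.choose_succ_mul_pow_mul_add_eq {N j p : ℕ} (hj : j = p * (N + 1 - j)) :
    N.choose (j + 1) * p ^ (j + 1) * (j + 1) + N.choose j * p ^ j * (p + 1)
      = N.choose j * p ^ j * (j + 1) := by
  have hjN : j ≤ N := by
    by_contra h
    rw [show N + 1 - j = 0 by omega, mul_zero] at hj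
    omega
  calc N.choose (j + 1) * p ^ (j + 1) * (j + 1) + N.choose j * p ^ j * (p + 1)
      = N.choose j * p ^ j * ((N - j) * p + p + 1) := by
        rw [mul_right_comm, Nat.choose_succ_right_eq]; ring
    _ = N.choose j * p ^ j * (j + 1) := by
        rw [← Nat.succ_mul, Nat.succ_eq_add_one, ← Nat.sub_add_comm hjN, mul_comm _ p, ← hj]

theorem exists_isOA_of_hammingSphere {k n j lam m : ℕ} [NeZero n] (hk : 2 ≤ k) (hj : 1 ≤ j)
    (h₂ : (k - 2).choose (j - 1) * (n - 1) ^ (j - 1) = lam)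
    (h₁ : (k - 2).choose j * (n - 1) ^ j = lam)
    (h₀ : (k - 2).choose (j + 1) * (n - 1) ^ (j + 1) + m = lam) :
    ∃ A : Fin (lam * n ^ 2) → Fin k → Fin n, IsOA lam k n A ∧ #{i | A i = 0} = m := by
  let S : Finset (Fin k → Fin n) := {v | hammingNorm v = j + 1}
  have hS : ∀ c₁ c₂ : Fin k, c₁ ≠ c₂ → ∀ x y : Fin n,
      (S.val + Multiset.replicate m 0).countP (fun v : Fin k → Fin n => v c₁ = x ∧ v c₂ = y)
        = lam := by
    intro c₁ c₂ hc x y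
    have hcount : ∀ w, w + ((if x = 0 then 0 else 1) + if y = 0 then 0 else 1) = j + 1 →
        #{v ∈ S | v c₁ = x ∧ v c₂ = y} = (k - 2).choose w * (n - 1) ^ w := by
      intro w hw
      have := card_filter_apply_eq_apply_eq_hammingNorm_eq hc x y w
      simp only [Fintype.card_fin] at this
      rw [← this, hw, filter_filter]
      exact congrArg card (filter_congr fun v _ => by tauto)
    rw [Multiset.countP_add, Multiset.countP_eq_card_filter, ← filter_val, ← card_def,
      ← Multiset.coe_replicate, Multiset.coe_countP, List.countP_replicate]
    by_cases hx : x = 0 <;> by_cases hy : y = 0 <;>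
      simp only [hx, hy, if_true, if_false] at hcount ⊢
    · rw [hcount (j + 1) rfl]; simpa using h₀
    · rw [hcount j rfl]; simpa [Ne.symm hy] using h₁
    · rw [hcount j rfl]; simpa [Ne.symm hx] using h₁
    · rw [hcount (j - 1) (by omega)]; simpa [Ne.symm hx] using h₂
  obtain ⟨A, hA, hA0⟩ := exists_isOA_of_countP_eq hk _ hS
  refine ⟨A, hA, hA0.trans ?_⟩
  rw [Multiset.count_add, Multiset.count_replicate_self, Multiset.count_eq_zero_of_notMem, zero_add]
  simp [S]

theorem exists_isOA_of_sub_one_eq_mul {k n a : ℕ} [NeZero n] (hk : 2 ≤ k) (hn : 2 ≤ n)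
    (ha : 1 ≤ a) (hka : k - 1 = n * a) :
    ∃ A : Fin ((k - 2).choose (a - 1) * (n - 1) ^ (k - a - 1) * n ^ 2) → Fin k → Fin n,
      IsOA ((k - 2).choose (a - 1) * (n - 1) ^ (k - a - 1)) k n A ∧
      #{i | A i = 0} * (k * (n - 1) + 1)
        = (k - 2).choose (a - 1) * (n - 1) ^ (k - a - 1) * n ^ 2 := by
  have h2a : 2 * a ≤ n * a := Nat.mul_le_mul_right a hn
  set j := k - a - 1
  have hj : j = (n - 1) * (k - 2 + 1 - j) := by
    rw [show k - 2 + 1 - j = a by omega, Nat.sub_one_mul]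
    omega
  set lam := (k - 2).choose (a - 1) * (n - 1) ^ j
  have h₁ : (k - 2).choose j * (n - 1) ^ j = lam := by
    rw [Nat.choose_symm_of_eq_add]
    omega
  have h₂ := (Nat.choose_pred_mul_pow_eq hj).trans h₁
  have h₀ := Nat.choose_succ_mul_pow_mul_add_eq hj
  rw [h₁, Nat.sub_add_cancel (by omega : 1 ≤ n)] at h₀
  set c := (k - 2).choose (j + 1) * (n - 1) ^ (j + 1)
  have hc : c ≤ lam := Nat.le_of_mul_le_mul_right (by omega) (by omega : 0 < j + 1)
  have hsub : (lam - c) * (j + 1) = lam * n := by rw [Nat.sub_mul]; omega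
  have hkn : k * (n - 1) + 1 = n * (j + 1) := by
    rw [show j + 1 = k - a by omega]
    zify [(by omega : 1 ≤ n), (by omega : a ≤ k), (by omega : 1 ≤ k)] at hka ⊢
    linear_combination -hka
  obtain ⟨A, hA, hA0⟩ := exists_isOA_of_hammingSphere hk (by omega) h₂ h₁ (Nat.add_sub_cancel' hc)
  refine ⟨A, hA, ?_⟩
  rw [hA0, hkn, mul_left_comm, hsub]
  ring

theorem stmt11_general (k n : ℕ) [NeZero n] (hk : 2 ≤ k) (hn : 2 ≤ n) (hdvd : n ∣ k - 1)
    (ha : 1 ≤ (k - 1) / n) :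
    ∃ A : Fin ((Nat.choose (k - 2) ((k - 1) / n - 1) * (n - 1) ^ (k - (k - 1) / n - 1)) * n ^ 2)
          → Fin k → Fin n,
      IsOA (Nat.choose (k - 2) ((k - 1) / n - 1) * (n - 1) ^ (k - (k - 1) / n - 1)) k n A ∧
      (Finset.univ.filter (fun i => A i = fun _ => (0 : Fin n))).card
        = Nat.choose (k - 2) ((k - 1) / n - 1) * (n - 1) ^ (k - (k - 1) / n - 1) * n ^ 2
            / (k * (n - 1) + 1) := by
  obtain ⟨A, hA, hm⟩ := exists_isOA_of_sub_one_eq_mul hk hn ha (Nat.mul_div_cancel' hdvd).symm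
  exact ⟨A, hA, (Nat.div_eq_of_eq_mul_left (Nat.succ_pos _) hm.symm).symm⟩

theorem stmt11 (k n : ℕ) [NeZero n] (hk : 2 ≤ k) (hn : 2 ≤ n) (hdvd : n ∣ k - 1)
    (ha : 1 ≤ (k - 1) / n) (hkn : n ^ 2 ≤ k * (n - 1) + 1) :
    ∃ A : Fin ((Nat.choose (k - 2) ((k - 1) / n - 1) * (n - 1) ^ (k - (k - 1) / n - 1)) * n ^ 2)
          → Fin k → Fin n,
      IsOA (Nat.choose (k - 2) ((k - 1) / n - 1) * (n - 1) ^ (k - (k - 1) / n - 1)) k n A ∧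
      (Finset.univ.filter (fun i => A i = fun _ => (0 : Fin n))).card
        = Nat.choose (k - 2) ((k - 1) / n - 1) * (n - 1) ^ (k - (k - 1) / n - 1) * n ^ 2
            / (k * (n - 1) + 1) :=
  stmt11_general k n hk hn hdvd ha
end

section
/- Suppose m = λn²/(k(n−1)+1) is a positive integer and s is a positive integer with s < (k(n−1)+1)² / ((n−1)(λn² + k(n−1)+1)). Then m = ⌊λn² / ((k−s)(n−1)+1)⌋. -/
/-!
Write `t = n - 1`, `D = k t + 1` and `d = (k - s) t + 1`, so that `D = d + s t` and
`λ n² = m D = m d + m s t`. Since `λ n² + D = (m + 1) D`, the bound on `s` says exactly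
`s t (m + 1) < D = d + s t`, i.e. `m s t < d`; hence `m d ≤ λ n² < (m + 1) d`.
-/

theorem div_eq_of_mul_add_eq_of_mul_lt {N a b m : ℕ} (hN : m * (a + b) = N)
    (hb : m * b < a) : N / a = m := by
  refine Nat.div_eq_of_lt_le ?_ ?_
  · rw [← hN]
    exact Nat.mul_le_mul_left m (Nat.le_add_right a b)
  · rw [← hN, mul_add, add_mul, one_mul]
    exact Nat.add_lt_add_left hb _

theorem mul_mul_succ_lt_of_lt_sq_div {s t m N D : ℕ} (ht : 0 < t) (hD : 0 < D)
    (hN : m * D = N) (hs : (s : ℚ) < (D : ℚ) ^ 2 / ((t * (N + D) : ℕ) : ℚ)) :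
    s * t * (m + 1) < D := by
  have hND : N + D = (m + 1) * D := by rw [← hN]; ring
  have hpos : (0 : ℚ) < ((t * (N + D) : ℕ) : ℚ) := by
    rw [hND]; positivity
  rw [lt_div_iff₀ hpos] at hs
  have hs' : s * t * (m + 1) * D < D * D := by
    have : s * (t * (N + D)) < D ^ 2 := by exact_mod_cast hs
    rw [hND] at this
    linarith
  exact Nat.lt_of_mul_lt_mul_right hs'

theorem stmt16_general (k n lam m s : ℕ) (hn : 2 ≤ n) (hsk : s < k)
    (heq : m * (k * (n - 1) + 1) = lam * n ^ 2)
    (hbound : (s : ℚ) < ((k * (n - 1) + 1 : ℕ) : ℚ) ^ 2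
        / (((n - 1) * (lam * n ^ 2 + k * (n - 1) + 1) : ℕ) : ℚ)) :
    m = lam * n ^ 2 / ((k - s) * (n - 1) + 1) := by
  set t := n - 1
  rw [Nat.add_assoc] at hbound
  have hkey : s * t * (m + 1) < k * t + 1 :=
    mul_mul_succ_lt_of_lt_sq_div (by omega) (Nat.succ_pos _) heq hbound
  have hsplit : k * t + 1 = ((k - s) * t + 1) + s * t := by
    have := Nat.mul_le_mul_right t hsk.le
    rw [Nat.sub_mul]
    omega
  refine (div_eq_of_mul_add_eq_of_mul_lt (by rw [← hsplit, heq]) ?_).symm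
  have : s * t * (m + 1) = m * (s * t) + s * t := by ring
  omega

theorem stmt16 (k n lam m s : ℕ) (hk : 2 ≤ k) (hn : 2 ≤ n) (hlam : 1 ≤ lam)
    (hm : 1 ≤ m) (hs : 1 ≤ s) (hsk : s < k)
    (heq : m * (k * (n - 1) + 1) = lam * n ^ 2)
    (hbound : (s : ℚ) < ((k * (n - 1) + 1 : ℕ) : ℚ) ^ 2
        / (((n - 1) * (lam * n ^ 2 + k * (n - 1) + 1) : ℕ) : ℚ)) :
    m = lam * n ^ 2 / ((k - s) * (n - 1) + 1) :=
  stmt16_general k n lam m s hn hsk heq hbound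
end

section
/- If there exists an OA_λ(k,n) with a row repeated m = λn²/(k(n−1)+1) times (an optimal OA), and s is a positive integer with s < (k(n−1)+1)²/((n−1)(λn² + k(n−1)+1)), then there exists an OA_λ(k−s, n) with a row repeated exactly ⌊λn²/((k−s)(n−1)+1)⌋ times. -/
open Finset Function

section Agreement

variable {ι κ α : Type*} [Fintype κ] [DecidableEq α] (A : ι → κ → α) (r : κ → α)

def agreement (i : ι) : ℕ := #{c | A i c = r c}

theorem agreement_of_eq {i : ι} (h : A i = r) : agreement A r i = Fintype.card κ := by
  simp [agreement, h]

variable [Fintype ι]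

theorem sum_agreement : ∑ i, agreement A r i = ∑ c, #{i | A i c = r c} := by
  simp only [agreement, card_filter]
  exact sum_comm

theorem sum_agreement_sq :
    ∑ i, agreement A r i ^ 2 = ∑ c₁, ∑ c₂, #{i | A i c₁ = r c₁ ∧ A i c₂ = r c₂} := by
  simp only [agreement, card_filter, sq, sum_mul_sum, ite_zero_mul_ite_zero, mul_one]
  rw [sum_comm]
  exact sum_congr rfl fun _ _ => sum_comm

theorem sum_agreement_eq_of_card_col {N : ℕ} (hcol : ∀ c x, #{i | A i c = x} = N) :
    ∑ i, agreement A r i = Fintype.card κ * N := by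
  simp [sum_agreement, hcol]

end Agreement

namespace IsOA

variable {lam k n : ℕ} {A : Fin (lam * n ^ 2) → Fin k → Fin n}

theorem comp_injective (hA : IsOA lam k n A) {k' : ℕ} {e : Fin k' → Fin k} (he : Injective e) :
    IsOA lam k' n (fun i c => A i (e c)) :=
  fun _ _ h x y => hA _ _ (he.ne h) x y

theorem card_filter_col_eq (hA : IsOA lam k n A) (hk : 2 ≤ k) (c : Fin k) (x : Fin n) :
    #{i | A i c = x} = lam * n := by
  have : Nontrivial (Fin k) := Fin.nontrivial_iff_two_le.mpr hk
  obtain ⟨c', hc'⟩ := exists_ne c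
  rw [card_eq_sum_card_fiberwise (f := fun i => A i c') (t := univ) fun _ _ => mem_univ _]
  simp [filter_filter, hA c c' hc'.symm, mul_comm]

theorem sum_agreement_sq_eq (hA : IsOA lam k n A) (hcol : ∀ c x, #{i | A i c = x} = lam * n)
    (r : Fin k → Fin n) :
    ∑ i, agreement A r i ^ 2 = k * (lam * n) + k * (k - 1) * lam := by
  have hpair : ∀ c₁ c₂, #{i | A i c₁ = r c₁ ∧ A i c₂ = r c₂}
      = if c₁ = c₂ then lam * n else lam := by
    intro c₁ c₂
    split_ifs with h
    · simp [h, hcol]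
    · exact hA c₁ c₂ h _ _
  simp only [sum_agreement_sq, hpair, sum_ite, filter_eq, filter_ne, mem_univ, ↓reduceIte,
    sum_const, card_singleton, card_erase_of_mem, card_univ, Fintype.card_fin, smul_eq_mul]
  ring

/-- The Bose–Bush bound on the multiplicity of a row. -/
theorem card_filter_eq_mul_le (hA : IsOA lam k n A) (hcol : ∀ c x, #{i | A i c = x} = lam * n)
    (hk : 0 < k) (hlam : 0 < lam) (hn : 2 ≤ n) (r : Fin k → Fin n) :
    #{i | A i = r} * (k * (n - 1) + 1) ≤ lam * n ^ 2 := by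
  set t := #{i | A i = r}
  set a : Fin (lam * n ^ 2) → ℤ := fun i => agreement A r i
  have hsum : ∑ i, a i = k * (lam * n) := by
    simpa [a] using congrArg (Nat.cast (R := ℤ)) (sum_agreement_eq_of_card_col A r hcol)
  have hsum_sq : ∑ i, a i ^ 2 = k * (lam * n) + k * (k - 1) * lam := by
    have := congrArg (Nat.cast (R := ℤ)) (hA.sum_agreement_sq_eq hcol r)
    push_cast [Nat.cast_sub (Nat.one_le_of_lt hk)] at this
    exact this
  have hcopies : ∀ j, ∑ i with A i = r, a i ^ j = t * k ^ j := fun j => by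
    have hk_row : ∀ i ∈ ({i | A i = r} : Finset _), a i ^ j = (k : ℤ) ^ j := fun i hi => by
      simp [a, agreement_of_eq A r (mem_filter.1 hi).2]
    rw [sum_congr rfl hk_row, sum_const, nsmul_eq_mul]
  have hcard : (#{i | A i ≠ r} : ℤ) = lam * n ^ 2 - t := by
    have := card_filter_add_card_filter_not (s := univ) fun i => A i = r
    rw [card_univ, Fintype.card_fin] at this
    rw [eq_sub_iff_add_eq, add_comm]
    exact_mod_cast this
  have hrest : ∑ i with A i ≠ r, a i = k * (lam * n) - t * k := by
    have := sum_filter_add_sum_filter_not univ (fun i => A i = r) a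
    have hcopies₁ := hcopies 1
    simp only [pow_one] at hcopies₁
    rw [hsum, hcopies₁] at this
    linarith
  have hrest_sq : ∑ i with A i ≠ r, a i ^ 2 = k * (lam * n) + k * (k - 1) * lam - t * k ^ 2 := by
    have := sum_filter_add_sum_filter_not univ (fun i => A i = r) (a · ^ 2)
    rw [hcopies 2, hsum_sq] at this
    linarith
  have hCS := sq_sum_le_card_mul_sum_sq (s := {i | A i ≠ r}) (f := a)
  rw [hrest, hrest_sq, hcard] at hCS
  zify [show 1 ≤ n by omega]
  have hpos : (0 : ℤ) < k * lam * (n - 1) := by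
    have : (2 : ℤ) ≤ n := by exact_mod_cast hn
    exact mul_pos (by positivity) (by linarith)
  refine le_of_mul_le_mul_left ?_ hpos
  -- `kλ(n-1)(λn² - t(k(n-1)+1))` is the Cauchy–Schwarz defect `(N - t) Σ a² - (Σ a)²` of the
  -- `N - t` rows that are not copies of `r`
  linear_combination hCS

end IsOA

theorem Nat.div_sub_eq_of_mul_eq {m K N e : ℕ} (hN : m * K = N) (he : e * (m + 1) < K) :
    N / (K - e) = m := by
  have heK : e ≤ K := le_of_lt (lt_of_le_of_lt (Nat.le_mul_of_pos_right e m.succ_pos) he)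
  refine Nat.div_eq_of_lt_le ?_ ?_
  · rw [← hN]
    exact Nat.mul_le_mul_left m (Nat.sub_le K e)
  · zify [heK] at hN he ⊢
    nlinarith

theorem mul_succ_lt_of_lt_div {s d m K N : ℕ} (hN : m * K = N)
    (h : (s : ℚ) < (K : ℚ) ^ 2 / ((d * (N + K) : ℕ) : ℚ)) : s * d * (m + 1) < K := by
  rcases Nat.eq_zero_or_pos (d * (N + K)) with h0 | hpos
  · rw [h0, Nat.cast_zero, div_zero] at h
    exact absurd h (not_lt.2 (Nat.cast_nonneg s))
  · have hq := (lt_div_iff₀ (by exact_mod_cast hpos)).1 h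
    have hnat : s * (d * (N + K)) < K ^ 2 := by exact_mod_cast hq
    subst hN
    refine Nat.lt_of_mul_lt_mul_right (a := K) ?_
    calc s * d * (m + 1) * K = s * (d * (m * K + K)) := by ring
      _ < K ^ 2 := hnat
      _ = K * K := sq K

theorem stmt17_general (k n lam m s : ℕ) (hk : 2 ≤ k) (hn : 2 ≤ n) (hlam : 1 ≤ lam)
    (hsk : s < k)
    (heq : m * (k * (n - 1) + 1) = lam * n ^ 2)
    (hbound : (s : ℚ) < ((k * (n - 1) + 1 : ℕ) : ℚ) ^ 2
        / (((n - 1) * (lam * n ^ 2 + k * (n - 1) + 1) : ℕ) : ℚ))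
    (A : Fin (lam * n ^ 2) → Fin k → Fin n) (hA : IsOA lam k n A)
    (r : Fin k → Fin n)
    (hr : (Finset.univ.filter (fun i => A i = r)).card = m) :
    ∃ A' : Fin (lam * n ^ 2) → Fin (k - s) → Fin n,
      IsOA lam (k - s) n A' ∧
      ∃ r' : Fin (k - s) → Fin n,
        (Finset.univ.filter (fun i => A' i = r')).card
          = lam * n ^ 2 / ((k - s) * (n - 1) + 1) := by
  have hks : k - s ≤ k := Nat.sub_le k s
  set A' : Fin (lam * n ^ 2) → Fin (k - s) → Fin n := fun i c => A i (Fin.castLE hks c)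
  set r' : Fin (k - s) → Fin n := fun c => r (Fin.castLE hks c)
  have hA' : IsOA lam (k - s) n A' := hA.comp_injective (Fin.castLE_injective hks)
  refine ⟨A', hA', r', ?_⟩
  have hfloor : lam * n ^ 2 / ((k - s) * (n - 1) + 1) = m := by
    have hsk' := Nat.mul_le_mul_right (n - 1) hsk.le
    rw [show (k - s) * (n - 1) + 1 = k * (n - 1) + 1 - s * (n - 1) by rw [Nat.sub_mul]; omega]
    rw [add_assoc] at hbound
    exact Nat.div_sub_eq_of_mul_eq heq (mul_succ_lt_of_lt_div heq hbound)
  rw [hfloor]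
  refine le_antisymm ?_ ?_
  · have hbb := hA'.card_filter_eq_mul_le (fun c x => hA.card_filter_col_eq hk _ x)
      (by omega) hlam hn r'
    rw [← hfloor]
    exact (Nat.le_div_iff_mul_le (by positivity)).2 hbb
  · rw [← hr]
    exact card_le_card (monotone_filter_right _ fun i _ (h : A i = r) => by simp [A', r', h])

theorem stmt17 (k n lam m s : ℕ) (hk : 2 ≤ k) (hn : 2 ≤ n) (hlam : 1 ≤ lam)
    (hm : 1 ≤ m) (hs : 1 ≤ s) (hsk : s < k)
    (heq : m * (k * (n - 1) + 1) = lam * n ^ 2)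
    (hbound : (s : ℚ) < ((k * (n - 1) + 1 : ℕ) : ℚ) ^ 2
        / (((n - 1) * (lam * n ^ 2 + k * (n - 1) + 1) : ℕ) : ℚ))
    (A : Fin (lam * n ^ 2) → Fin k → Fin n) (hA : IsOA lam k n A)
    (r : Fin k → Fin n)
    (hr : (Finset.univ.filter (fun i => A i = r)).card = m) :
    ∃ A' : Fin (lam * n ^ 2) → Fin (k - s) → Fin n,
      IsOA lam (k - s) n A' ∧
      ∃ r' : Fin (k - s) → Fin n,
        (Finset.univ.filter (fun i => A' i = r')).card
          = lam * n ^ 2 / ((k - s) * (n - 1) + 1) :=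
  stmt17_general k n lam m s hk hn hlam hsk heq hbound A hA r hr
end
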